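/- arXiv:1808.03104 — 5 statements merged into one kernel-verified Lean document; each statement's English description precedes it below -/
import Mathlib

section
/- Let q: ℝ → ℝ be positive and differentiable, and let u = -(1/q)·dq/dθ. Then u satisfies the Riccati equation du/dθ = (α-1)u² (for some constant α ≠ 0) if and only if there exist constants a, b such that q(θ) as a function of arc length s (with ds/dθ = q) satisfies q^α = a·s + b in the case α ≠ 0; in particular for α = 1, u is constant and q(θ) = q(0)·exp(-u·θ), a logarithmic spiral. -/
/-!
The quantity `u · q^(α-1)` is a first integral of the Riccati equation `u' = (α-1)u²`:
its derivative is `(α-1)u²q^(α-1) - (α-1)u²q^(α-1) = 0`, and conversely `u = c·q^(1-α)`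
solves the equation. Since `d(q^α)/dθ = -α u q^α` and `ds/dθ = q`, the same condition
`u = c·q^(1-α)` says exactly that `q^α` has derivative proportional to that of `s`,
i.e. that `q^α` is an affine function of `s`. For `α = 1` it makes `u` constant, so
`q' = -u q` integrates to an exponential.
-/

open Real Filter

theorem eq_of_forall_hasDerivAt_zero {f : ℝ → ℝ} (hf : ∀ x, HasDerivAt f 0 x) (x y : ℝ) :
    f x = f y :=
  is_const_of_deriv_eq_zero (fun z => (hf z).differentiableAt) (fun z => (hf z).deriv) x y

theorem exists_eq_mul_add_iff_exists_deriv_eq_mul {f S f' S' : ℝ → ℝ}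
    (hf : ∀ x, HasDerivAt f (f' x) x) (hS : ∀ x, HasDerivAt S (S' x) x) :
    (∃ a b, ∀ x, f x = a * S x + b) ↔ ∃ a, ∀ x, f' x = a * S' x := by
  constructor
  · rintro ⟨a, b, hab⟩
    refine ⟨a, fun x => (hf x).unique ?_⟩
    exact (((hS x).const_mul a).add_const b).congr_of_eventuallyEq (Eventually.of_forall hab)
  · rintro ⟨a, ha⟩
    have hzero : ∀ x, HasDerivAt (fun t => f t - a * S t) 0 x := fun x =>
      ((hf x).sub ((hS x).const_mul a)).congr_deriv (by rw [ha x, sub_self])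
    refine ⟨a, f 0 - a * S 0, fun x => ?_⟩
    linarith [eq_of_forall_hasDerivAt_zero hzero x 0]

theorem eq_mul_exp_of_hasDerivAt_eq_mul {f : ℝ → ℝ} {k : ℝ}
    (hf : ∀ x, HasDerivAt f (k * f x) x) (x : ℝ) : f x = f 0 * exp (k * x) := by
  have hzero : ∀ t, HasDerivAt (fun t => f t * exp (-(k * t))) 0 t := fun t =>
    ((hf t).mul ((hasDerivAt_id t).const_mul k).neg.exp).congr_deriv
      (by simp only [id, mul_one]; ring)
  have hconst := eq_of_forall_hasDerivAt_zero hzero x 0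
  simp only [mul_zero, neg_zero, exp_zero, mul_one, exp_neg] at hconst
  field_simp at hconst
  linarith

section SimilarityCurvature

variable {q u : ℝ → ℝ}

theorem hasDerivAt_rpow_of_hasDerivAt_neg_mul {θ : ℝ} (p : ℝ) (hq : 0 < q θ)
    (hq' : HasDerivAt q (-u θ * q θ) θ) :
    HasDerivAt (fun t => q t ^ p) (-p * u θ * q θ ^ p) θ :=
  (hq'.rpow_const (Or.inl hq.ne')).congr_deriv (by
    rw [rpow_sub_one hq.ne']
    field_simp)

theorem riccati_iff_eq_mul_rpow (α : ℝ) (hq : ∀ θ, 0 < q θ)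
    (hq' : ∀ θ, HasDerivAt q (-u θ * q θ) θ) :
    (∀ θ, HasDerivAt u ((α - 1) * u θ ^ 2) θ) ↔ ∃ c, ∀ θ, u θ = c * q θ ^ (1 - α) := by
  have hpow p θ := hasDerivAt_rpow_of_hasDerivAt_neg_mul p (hq θ) (hq' θ)
  constructor
  · intro hR
    have hzero : ∀ θ, HasDerivAt (fun t => u t * q t ^ (α - 1)) 0 θ := fun θ =>
      ((hR θ).mul (hpow (α - 1) θ)).congr_deriv (by ring)
    refine ⟨u 0 * q 0 ^ (α - 1), fun θ => ?_⟩
    rw [← eq_of_forall_hasDerivAt_zero hzero θ 0, mul_assoc, ← rpow_add (hq θ)]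
    simp
  · rintro ⟨c, hc⟩ θ
    refine (((hpow (1 - α) θ).const_mul c).congr_of_eventuallyEq
      (Eventually.of_forall hc)).congr_deriv ?_
    rw [hc θ]
    ring

theorem exists_rpow_eq_mul_add_iff_eq_mul_rpow {α : ℝ} (hα : α ≠ 0) {s : ℝ → ℝ}
    (hq : ∀ θ, 0 < q θ) (hq' : ∀ θ, HasDerivAt q (-u θ * q θ) θ)
    (hs : ∀ θ, HasDerivAt s (q θ) θ) :
    (∃ a b, ∀ θ, q θ ^ α = a * s θ + b) ↔ ∃ c, ∀ θ, u θ = c * q θ ^ (1 - α) := by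
  rw [exists_eq_mul_add_iff_exists_deriv_eq_mul
    (fun θ => hasDerivAt_rpow_of_hasDerivAt_neg_mul α (hq θ) (hq' θ)) hs]
  have key c θ : u θ = c * q θ ^ (1 - α) ↔ -α * u θ * q θ ^ α = -α * c * q θ := by
    rw [rpow_sub (hq θ), rpow_one, mul_div_assoc', eq_div_iff (rpow_pos_of_pos (hq θ) α).ne',
      mul_assoc, mul_assoc, mul_right_inj' (neg_ne_zero.2 hα)]
  constructor
  · rintro ⟨a, ha⟩
    exact ⟨-a / α, fun θ => (key _ θ).2 (by rw [ha θ]; field_simp)⟩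
  · rintro ⟨c, hc⟩
    exact ⟨-α * c, fun θ => (key c θ).1 (hc θ)⟩

end SimilarityCurvature

/-- The Riccati (Bernoulli) equation for the similarity curvature `u = -q'/q`
is equivalent to the log-aesthetic condition `q^α = a·s + b` in terms of
arc length `s(θ) = ∫₀^θ q`; in particular for `α = 1`, `u` is constant and
`q` is the radius function of a logarithmic spiral. -/
theorem lac_riccati_iff_arclength
    (α : ℝ) (hα : α ≠ 0)
    (q u : ℝ → ℝ)
    (hqpos : ∀ θ, 0 < q θ)
    (hqdiff : Differentiable ℝ q)
    (hu : ∀ θ, u θ = -(deriv q θ) / q θ) :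
    ((∀ θ, HasDerivAt u ((α - 1) * (u θ) ^ 2) θ)
      ↔ ∃ a b : ℝ, ∀ θ, q θ ^ α = a * (∫ τ in (0:ℝ)..θ, q τ) + b)
    ∧ (α = 1 → (∀ θ, HasDerivAt u ((α - 1) * (u θ) ^ 2) θ) →
        ∃ u₀ : ℝ, (∀ θ, u θ = u₀) ∧ ∀ θ, q θ = q 0 * Real.exp (-u₀ * θ)) := by
  have hq' θ : HasDerivAt q (-u θ * q θ) θ :=
    (hqdiff θ).hasDerivAt.congr_deriv (by rw [hu θ]; field_simp [(hqpos θ).ne'])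
  have hs θ : HasDerivAt (fun t => ∫ τ in (0:ℝ)..t, q τ) (q θ) θ :=
    (hqdiff.continuous.integral_hasStrictDerivAt 0 θ).hasDerivAt
  refine ⟨(riccati_iff_eq_mul_rpow α hqpos hq').trans
    (exists_rpow_eq_mul_add_iff_eq_mul_rpow hα hqpos hq' hs).symm, ?_⟩
  rintro rfl hR
  obtain ⟨c, hc⟩ := (riccati_iff_eq_mul_rpow 1 hqpos hq').1 hR
  simp only [sub_self, rpow_zero, mul_one] at hc
  refine ⟨c, hc, eq_mul_exp_of_hasDerivAt_eq_mul fun θ => ?_⟩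
  simpa [hc θ] using hq' θ
end

section
/- The compatibility condition ∂L/∂t - ∂M/∂θ = LM - ML for L = [[-u,-1],[1,-u]] and M = [[m, -b],[b, m]] with m = -∂u/∂θ + u² + 1 - bu is equivalent to the Burgers equation ∂u/∂t = ∂/∂θ(∂u/∂θ - u² + bu). -/
/-- The compatibility condition `∂L/∂t - ∂M/∂θ = [L,M]` of the similarity
Frenet equations is equivalent to the Burgers equation. -/
theorem zero_curvature_iff_burgers
    (u : ℝ → ℝ → ℝ) (b : ℝ) (hu : ContDiff ℝ (⊤ : ℕ∞) (Function.uncurry u))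
    (m : ℝ → ℝ → ℝ)
    (hm : ∀ θ t, m θ t = -(deriv (fun x => u x t) θ) + (u θ t) ^ 2 + 1 - b * u θ t)
    (L M : ℝ → ℝ → Matrix (Fin 2) (Fin 2) ℝ)
    (hL : ∀ θ t, L θ t = !![-(u θ t), -1; 1, -(u θ t)])
    (hM : ∀ θ t, M θ t = !![m θ t, -b; b, m θ t]) :
    (∀ θ t : ℝ, ∀ i j : Fin 2,
        deriv (fun s => L θ s i j) t - deriv (fun x => M x t i j) θ
          = (L θ t * M θ t - M θ t * L θ t) i j)
      ↔
    (∀ θ t : ℝ, deriv (fun s => u θ s) t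
        = deriv (fun x => deriv (fun y => u y t) x - (u x t) ^ 2 + b * u x t) θ) := by
  have comm : ∀ θ t : ℝ, L θ t * M θ t - M θ t * L θ t = 0 := by
    intro θ t
    rw [hL, hM]
    ext i j
    fin_cases i <;> fin_cases j <;>
      simp [Matrix.mul_apply, Fin.sum_univ_two] <;> ring
  have key : ∀ θ t : ℝ, deriv (fun x => m x t) θ
      = -deriv (fun x => deriv (fun y => u y t) x - (u x t) ^ 2 + b * u x t) θ := by
    intro θ t
    have h1 : (fun x => m x t)
        = fun x => -(deriv (fun y => u y t) x - (u x t) ^ 2 + b * u x t) + 1 := by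
      funext x; rw [hm]; ring
    rw [h1, deriv_add_const, deriv.fun_neg]
  have eL00 : ∀ θ : ℝ, (fun s => L θ s (0 : Fin 2) (0 : Fin 2)) = fun s => -(u θ s) := by
    intro θ; funext s; rw [hL]; simp
  have eL11 : ∀ θ : ℝ, (fun s => L θ s (1 : Fin 2) (1 : Fin 2)) = fun s => -(u θ s) := by
    intro θ; funext s; rw [hL]; simp
  have eM00 : ∀ t : ℝ, (fun x => M x t (0 : Fin 2) (0 : Fin 2)) = fun x => m x t := by
    intro t; funext x; rw [hM]; simp
  have eM11 : ∀ t : ℝ, (fun x => M x t (1 : Fin 2) (1 : Fin 2)) = fun x => m x t := by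
    intro t; funext x; rw [hM]; simp
  constructor
  · intro h θ t
    have h0 := h θ t 0 0
    rw [comm, eL00, eM00, key, deriv.fun_neg] at h0
    simp at h0
    linarith
  · intro h θ t i j
    rw [comm]
    fin_cases i <;> fin_cases j <;>
        simp only [Fin.zero_eta, Fin.mk_one, Fin.isValue]
    · rw [eL00, eM00, key, deriv.fun_neg]
      simp
      linarith [h θ t]
    · have e1 : (fun s => L θ s (0 : Fin 2) (1 : Fin 2)) = fun _ => (-1 : ℝ) := by
        funext s; rw [hL]; simp
      have e2 : (fun x => M x t (0 : Fin 2) (1 : Fin 2)) = fun _ => (-b : ℝ) := by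
        funext x; rw [hM]; simp
      rw [e1, e2]; simp
    · have e1 : (fun s => L θ s (1 : Fin 2) (0 : Fin 2)) = fun _ => (1 : ℝ) := by
        funext s; rw [hL]; simp
      have e2 : (fun x => M x t (1 : Fin 2) (0 : Fin 2)) = fun _ => (b : ℝ) := by
        funext x; rw [hM]; simp
      rw [e1, e2]; simp
    · rw [eL11, eM11, key, deriv.fun_neg]
      simp
      linarith [h θ t]
end

section
/- In the compatibility condition L_n^{m+1}·M_n^m = M_{n+1}^m·L_n^m with L_n^m = u_n^m·R(κ) and M_n^m = H_n^m·I where H_n^m = 1 + (σ/κ²)(u_n^m - 2cos κ + 1/u_{n-1}^m), one has equivalence with the discrete Burgers equation u_n^{m+1}/u_n^m = H_{n+1}^m / H_n^m. -/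
/-! Both `L_n^{m+1} M_n^m` and `M_{n+1}^m L_n^m` are scalar multiples of the rotation `R(κ)`,
with coefficients `u_n^{m+1} H_n^m` and `H_{n+1}^m u_n^m`. Since `det R(κ) = 1`, `R(κ) ≠ 0`, so the
compatibility condition amounts to equality of these coefficients, which is the discrete Burgers
equation after dividing by `u_n^m H_n^m ≠ 0`. -/

theorem Matrix.rotation_ne_zero (θ : ℝ) :
    !![Real.cos θ, -Real.sin θ; Real.sin θ, Real.cos θ] ≠ 0 := by
  intro h
  have hdet := congrArg Matrix.det h
  rw [Matrix.det_fin_two_of, Matrix.det_zero] at hdet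
  nlinarith [Real.sin_sq_add_cos_sq θ]

theorem smul_mul_smul_one_eq_smul_one_mul_smul_iff {K A : Type*} [Field K] [Ring A] [Algebra K A]
    {x : A} (hx : x ≠ 0) (a b c d : K) :
    (a • x) * (b • 1) = (c • 1) * (d • x) ↔ a * b = c * d := by
  rw [smul_mul_smul_comm, smul_mul_smul_comm, mul_one, one_mul, smul_left_inj hx]

theorem discrete_compatibility_iff_dBurgers_general
    (κ : ℝ)
    (u : ℤ → ℤ → ℝ) (hu : ∀ n m, 0 < u n m)
    (H : ℤ → ℤ → ℝ)
    (hH0 : ∀ n m, H n m ≠ 0)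
    (R : Matrix (Fin 2) (Fin 2) ℝ)
    (hR : R = !![Real.cos κ, -Real.sin κ; Real.sin κ, Real.cos κ])
    (L M : ℤ → ℤ → Matrix (Fin 2) (Fin 2) ℝ)
    (hL : ∀ n m, L n m = u n m • R)
    (hM : ∀ n m, M n m = H n m • (1 : Matrix (Fin 2) (Fin 2) ℝ)) :
    (∀ n m : ℤ, L n (m + 1) * M n m = M (n + 1) m * L n m)
      ↔ (∀ n m : ℤ, u n (m + 1) / u n m = H (n + 1) m / H n m) := by
  have hR0 : R ≠ 0 := hR ▸ Matrix.rotation_ne_zero κ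
  refine forall₂_congr fun n m => ?_
  rw [hL, hL, hM, hM, smul_mul_smul_one_eq_smul_one_mul_smul_iff hR0,
    div_eq_div_iff (hu n m).ne' (hH0 n m)]

/-- The discrete compatibility condition `L_n^{m+1} M_n^m = M_{n+1}^m L_n^m`
with `L_n^m = u_n^m R(κ)` and `M_n^m = H_n^m I` is equivalent to the discrete
Burgers equation `u_n^{m+1}/u_n^m = H_{n+1}^m/H_n^m`. -/
theorem discrete_compatibility_iff_dBurgers
    (σ κ : ℝ) (hκ : 0 < κ)
    (u : ℤ → ℤ → ℝ) (hu : ∀ n m, 0 < u n m)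
    (H : ℤ → ℤ → ℝ)
    (hH : ∀ n m : ℤ, H n m = 1 + σ / κ ^ 2 * (u n m - 2 * Real.cos κ + 1 / u (n - 1) m))
    (hH0 : ∀ n m, H n m ≠ 0)
    (R : Matrix (Fin 2) (Fin 2) ℝ)
    (hR : R = !![Real.cos κ, -Real.sin κ; Real.sin κ, Real.cos κ])
    (L M : ℤ → ℤ → Matrix (Fin 2) (Fin 2) ℝ)
    (hL : ∀ n m, L n m = u n m • R)
    (hM : ∀ n m, M n m = H n m • (1 : Matrix (Fin 2) (Fin 2) ℝ)) :
    (∀ n m : ℤ, L n (m + 1) * M n m = M (n + 1) m * L n m)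
      ↔ (∀ n m : ℤ, u n (m + 1) / u n m = H (n + 1) m / H n m) :=
  discrete_compatibility_iff_dBurgers_general κ u hu H hH0 R hR L M hL hM
end

section
/- If q_n^m satisfies the linear discrete heat equation (q_n^{m+1} - q_n^m)/σ = (q_{n+1}^m - 2cos κ·q_n^m + q_{n-1}^m)/κ² with all q_n^m > 0, then u_n^m = q_{n+1}^m/q_n^m satisfies the discrete Burgers equation u_n^{m+1}/u_n^m = (1 + (σ/κ²)(u_{n+1}^m - 2cos κ + 1/u_n^m)) / (1 + (σ/κ²)(u_n^m - 2cos κ + 1/u_{n-1}^m)). -/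
/-! One step of the heat equation says that the time ratio `q_n^{m+1} / q_n^m` is exactly the
Burgers factor `1 + (σ/κ²)(u_n^m - 2 cos κ + 1/u_{n-1}^m)`; since `u_n^{m+1} / u_n^m` is the
quotient of these time ratios at `n + 1` and at `n`, it is the quotient of the two factors. -/

theorem div_eq_of_heat_step {K : Type*} [Field K] {σ c lam prev cur next cur' : K}
    (hσ : σ ≠ 0) (hcur : cur ≠ 0)
    (heat : (cur' - cur) / σ = (next - lam * cur + prev) / c) :
    cur' / cur = 1 + σ / c * (next / cur - lam + 1 / (cur / prev)) := by
  have hstep : cur' - cur = σ / c * (next - lam * cur + prev) := by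
    rw [(div_eq_iff hσ).1 heat]
    ring
  rw [one_div_div, div_eq_iff hcur]
  field_simp
  linear_combination hstep

theorem discrete_cole_hopf_burgers_general
    (σ κ : ℝ) (hσ : σ ≠ 0)
    (q : ℤ → ℤ → ℝ) (hq : ∀ n m, 0 < q n m)
    (hheat : ∀ n m : ℤ, (q n (m + 1) - q n m) / σ
        = (q (n + 1) m - 2 * Real.cos κ * q n m + q (n - 1) m) / κ ^ 2)
    (u : ℤ → ℤ → ℝ) (hu : ∀ n m : ℤ, u n m = q (n + 1) m / q n m) :
    ∀ n m : ℤ, u n (m + 1) / u n m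
      = (1 + σ / κ ^ 2 * (u (n + 1) m - 2 * Real.cos κ + 1 / u n m))
        / (1 + σ / κ ^ 2 * (u n m - 2 * Real.cos κ + 1 / u (n - 1) m)) := by
  intro n m
  have hratio : ∀ k : ℤ, q k (m + 1) / q k m
      = 1 + σ / κ ^ 2 * (u k m - 2 * Real.cos κ + 1 / u (k - 1) m) := by
    intro k
    rw [hu, hu, sub_add_cancel]
    exact div_eq_of_heat_step hσ (hq k m).ne' (hheat k m)
  calc u n (m + 1) / u n m
      = q (n + 1) (m + 1) / q (n + 1) m / (q n (m + 1) / q n m) := by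
        rw [hu, hu, div_div_div_comm]
    _ = _ := by rw [hratio, hratio, add_sub_cancel_right]

/-- Discrete Cole-Hopf transformation: if `q_n^m` satisfies the linear
discrete heat equation, then `u_n^m = q_{n+1}^m/q_n^m` satisfies the discrete
Burgers equation. -/
theorem discrete_cole_hopf_burgers
    (σ κ : ℝ) (hσ : σ ≠ 0) (hκ : κ ≠ 0)
    (q : ℤ → ℤ → ℝ) (hq : ∀ n m, 0 < q n m)
    (hheat : ∀ n m : ℤ, (q n (m + 1) - q n m) / σ
        = (q (n + 1) m - 2 * Real.cos κ * q n m + q (n - 1) m) / κ ^ 2)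
    (u : ℤ → ℤ → ℝ) (hu : ∀ n m : ℤ, u n m = q (n + 1) m / q n m)
    (hden : ∀ n m : ℤ,
      1 + σ / κ ^ 2 * (u n m - 2 * Real.cos κ + 1 / u (n - 1) m) ≠ 0) :
    ∀ n m : ℤ, u n (m + 1) / u n m
      = (1 + σ / κ ^ 2 * (u (n + 1) m - 2 * Real.cos κ + 1 / u n m))
        / (1 + σ / κ ^ 2 * (u n m - 2 * Real.cos κ + 1 / u (n - 1) m)) :=
  discrete_cole_hopf_burgers_general σ κ hσ q hq hheat u hu
end

section
/- For a discrete plane curve γ_n with δγ_n = ξ_n T_n + η_n N_n, the induced variations satisfy δu_n/u_n = χ_{n+1} - χ_n, δκ_{n+1} = ψ_{n+1} - ψ_n, and δq_n/q_n = χ_n, where χ_n = ξ_{n+1}u_n cos κ_{n+1} - η_{n+1}u_n sin κ_{n+1} - ξ_n and ψ_n = ξ_{n+1}u_n sin κ_{n+1} + η_{n+1}u_n cos κ_{n+1} - η_n. -/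
/-- Rotation by `π/2` in the plane. -/
noncomputable def Jrot (v : EuclideanSpace ℝ (Fin 2)) : EuclideanSpace ℝ (Fin 2) :=
  WithLp.toLp 2 ![-(v 1), v 0]

/-- Rotation of the plane by angle `κ`. -/
noncomputable def rot (κ : ℝ) (v : EuclideanSpace ℝ (Fin 2)) : EuclideanSpace ℝ (Fin 2) :=
  WithLp.toLp 2 ![Real.cos κ * v 0 - Real.sin κ * v 1, Real.sin κ * v 0 + Real.cos κ * v 1]
/-!
Identify the plane with `ℂ`, so that `N_n = i T_n` and `rot κ` is multiplication by `e^{iκ}`.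
The Frenet equation `T_{n+1} = u_n e^{iκ_{n+1}} T_n` turns the variation `δT_n = δγ_{n+1} - δγ_n`
into `δT_n = (χ_n + iψ_n) T_n`: the logarithmic derivative of `T_n` is `χ_n + iψ_n`. Now `q_n = |T_n|`,
while `u_n` and `κ_{n+1}` are the modulus and a differentiable argument of `T_{n+1}/T_n`, whose
logarithmic derivative is `(χ_{n+1} - χ_n) + i(ψ_{n+1} - ψ_n)`. The real part of a logarithmic
derivative is the logarithmic derivative of the modulus, and its imaginary part is the derivative
of the argument.
-/

open Complex

theorem sub_eq_smul_add_smul_Jrot (u κ ξ₀ η₀ ξ₁ η₁ : ℝ) (v : EuclideanSpace ℝ (Fin 2)) :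
    (ξ₁ • (u • rot κ v) + η₁ • Jrot (u • rot κ v)) - (ξ₀ • v + η₀ • Jrot v)
      = (ξ₁ * u * Real.cos κ - η₁ * u * Real.sin κ - ξ₀) • v
        + (ξ₁ * u * Real.sin κ + η₁ * u * Real.cos κ - η₀) • Jrot v := by
  ext i
  fin_cases i <;> (simp [rot, Jrot]; ring)

noncomputable def toComplex : EuclideanSpace ℝ (Fin 2) ≃ₗᵢ[ℝ] ℂ :=
  Complex.orthonormalBasisOneI.repr.symm

theorem toComplex_apply (v : EuclideanSpace ℝ (Fin 2)) : toComplex v = v 0 + v 1 * I := rfl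

theorem toComplex_Jrot (v : EuclideanSpace ℝ (Fin 2)) : toComplex (Jrot v) = I * toComplex v := by
  apply Complex.ext <;> simp [toComplex_apply, Jrot]

theorem toComplex_rot (κ : ℝ) (v : EuclideanSpace ℝ (Fin 2)) :
    toComplex (rot κ v) = exp (κ * I) * toComplex v := by
  rw [exp_mul_I]
  apply Complex.ext
  · simp [toComplex_apply, rot]
  · simp [toComplex_apply, rot]
    ring

theorem toComplex_add_smul_frame (v : EuclideanSpace ℝ (Fin 2)) (ε a b : ℝ) :
    toComplex (v + ε • (a • v + b • Jrot v)) = toComplex v + ε * ((a + b * I) * toComplex v) := by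
  simp [toComplex_Jrot]
  ring

theorem logDeriv_add_ofReal_mul_mul_self (a b : ℂ) (ha : a ≠ 0) :
    logDeriv (fun t : ℝ => a + t * (b * a)) 0 = b := by
  have h := ((hasDerivAt_id' (0 : ℝ)).ofReal_comp.mul_const (b * a)).const_add a
  rw [logDeriv_apply, h.deriv]
  simp [ha]

theorem hasDerivAt_norm_of_logDeriv {g : ℝ → ℂ} {x : ℝ} (hg : DifferentiableAt ℝ g x)
    (h0 : g x ≠ 0) : HasDerivAt (fun t => ‖g t‖) (‖g x‖ * (logDeriv g x).re) x := by
  have hpos : 0 < ‖g x‖ := norm_pos_iff.mpr h0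
  have h := hg.hasDerivAt.norm_sq.sqrt (by positivity)
  simp only [Real.sqrt_sq (norm_nonneg _)] at h
  convert h using 1
  rw [logDeriv_apply, Complex.inner, div_re, ← Complex.sq_norm]
  simp only [mul_re, conj_re, conj_im]
  field_simp
  ring

theorem im_logDeriv_ofReal_mul_exp_mul_I {r θ : ℝ → ℝ} {x : ℝ} (hr : DifferentiableAt ℝ r x)
    (hθ : DifferentiableAt ℝ θ x) (hr0 : r x ≠ 0) :
    (logDeriv (fun t => (r t : ℂ) * exp (θ t * I)) x).im = deriv θ x := by
  have h := hr.hasDerivAt.ofReal_comp.fun_mul (hθ.hasDerivAt.ofReal_comp.mul_const I).cexp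
  rw [logDeriv_apply, h.deriv]
  have : (r x : ℂ) ≠ 0 := by exact_mod_cast hr0
  field_simp
  simp [mul_div_cancel_left₀ _ hr0]

/-- First variation formulas for discrete plane curves in similarity
geometry: under the variation `γ_n ↦ γ_n + ε(ξ_n T_n + η_n N_n)` one has
`δu_n/u_n = χ_{n+1} - χ_n`, `δκ_{n+1} = ψ_{n+1} - ψ_n`, `δq_n/q_n = χ_n`. -/
theorem discrete_variation_formulas
    (γ : ℝ → ℤ → EuclideanSpace ℝ (Fin 2))
    (ξ η : ℤ → ℝ)
    (T : ℝ → ℤ → EuclideanSpace ℝ (Fin 2))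
    (hT : ∀ (ε : ℝ) (n : ℤ), T ε n = γ ε (n + 1) - γ ε n)
    (hT0 : ∀ (ε : ℝ) (n : ℤ), T ε n ≠ 0)
    (q : ℝ → ℤ → ℝ) (hq : ∀ (ε : ℝ) (n : ℤ), q ε n = ‖T ε n‖)
    (u : ℝ → ℤ → ℝ) (hu : ∀ (ε : ℝ) (n : ℤ), u ε n = q ε (n + 1) / q ε n)
    (κ : ℝ → ℤ → ℝ)
    (hκdiff : ∀ n : ℤ, Differentiable ℝ (fun ε => κ ε n))
    (hfrenet : ∀ (ε : ℝ) (n : ℤ), T ε n = u ε (n - 1) • rot (κ ε n) (T ε (n - 1)))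
    (hfam : ∀ (ε : ℝ) (n : ℤ),
      γ ε n = γ 0 n + ε • (ξ n • T 0 n + η n • Jrot (T 0 n)))
    (χ ψ : ℤ → ℝ)
    (hχ : ∀ n : ℤ, χ n = ξ (n + 1) * u 0 n * Real.cos (κ 0 (n + 1))
        - η (n + 1) * u 0 n * Real.sin (κ 0 (n + 1)) - ξ n)
    (hψ : ∀ n : ℤ, ψ n = ξ (n + 1) * u 0 n * Real.sin (κ 0 (n + 1))
        + η (n + 1) * u 0 n * Real.cos (κ 0 (n + 1)) - η n) :
    ∀ n : ℤ,
      HasDerivAt (fun ε => u ε n) (u 0 n * (χ (n + 1) - χ n)) 0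
      ∧ HasDerivAt (fun ε => κ ε (n + 1)) (ψ (n + 1) - ψ n) 0
      ∧ HasDerivAt (fun ε => q ε n) (q 0 n * χ n) 0 := by
  intro n
  have hfrenet_succ (ε : ℝ) (m : ℤ) : T ε (m + 1) = u ε m • rot (κ ε (m + 1)) (T ε m) := by
    simpa using hfrenet ε (m + 1)
  have hvar (ε : ℝ) (m : ℤ) : T ε m = T 0 m + ε • (χ m • T 0 m + ψ m • Jrot (T 0 m)) := by
    rw [hχ, hψ, ← sub_eq_smul_add_smul_Jrot, ← hfrenet_succ, hT ε m, hfam ε (m + 1), hfam ε m]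
    linear_combination (norm := module) -(hT 0 m)
  set Z : ℝ → ℤ → ℂ := fun ε m => toComplex (T ε m) with hZ
  have hZ0 (ε : ℝ) (m : ℤ) : Z ε m ≠ 0 := by simpa [hZ] using hT0 ε m
  have hZvar (m : ℤ) : (fun ε => Z ε m) = fun ε : ℝ => Z 0 m + ε * ((χ m + ψ m * I) * Z 0 m) :=
    funext fun ε => by simp only [hZ]; rw [hvar ε m, toComplex_add_smul_frame]
  have hZdiff (m : ℤ) : DifferentiableAt ℝ (fun ε => Z ε m) 0 := by rw [hZvar]; fun_prop
  have hlog (m : ℤ) : logDeriv (fun ε => Z ε m) 0 = χ m + ψ m * I := by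
    rw [hZvar, logDeriv_add_ofReal_mul_mul_self _ _ (hZ0 0 m)]
  have hlogdiv : logDeriv (fun ε => Z ε (n + 1) / Z ε n) 0
      = (χ (n + 1) + ψ (n + 1) * I) - (χ n + ψ n * I) := by
    rw [logDeriv_div (f := fun ε => Z ε (n + 1)) (g := fun ε => Z ε n) 0 (hZ0 0 _) (hZ0 0 _)
      (hZdiff _) (hZdiff _), hlog, hlog]
  have hpolar : (fun ε => Z ε (n + 1) / Z ε n) = fun ε => (u ε n : ℂ) * exp (κ ε (n + 1) * I) :=
    funext fun ε => by
      rw [div_eq_iff (hZ0 ε n)]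
      simp [hZ, hfrenet_succ, toComplex_rot, mul_assoc]
  have hnorm (ε : ℝ) (m : ℤ) : q ε m = ‖Z ε m‖ := by simp [hZ, hq]
  have hunorm (ε : ℝ) : u ε n = ‖Z ε (n + 1) / Z ε n‖ := by rw [hu, hnorm, hnorm, norm_div]
  have hratio0 : Z 0 (n + 1) / Z 0 n ≠ 0 := div_ne_zero (hZ0 0 _) (hZ0 0 n)
  have hderiv_u : HasDerivAt (fun ε => u ε n) (u 0 n * (χ (n + 1) - χ n)) 0 := by
    have h := hasDerivAt_norm_of_logDeriv (g := fun ε => Z ε (n + 1) / Z ε n)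
      ((hZdiff _).div (hZdiff _) (hZ0 0 n)) hratio0
    simp only [← hunorm, hlogdiv] at h
    simpa using h
  refine ⟨hderiv_u, ?_, ?_⟩
  · have h := im_logDeriv_ofReal_mul_exp_mul_I hderiv_u.differentiableAt (hκdiff (n + 1) 0)
      (by rw [hunorm]; exact norm_ne_zero_iff.mpr hratio0)
    rw [← hpolar, hlogdiv] at h
    simpa [← h] using (hκdiff (n + 1) 0).hasDerivAt
  · simpa [hlog, hnorm] using hasDerivAt_norm_of_logDeriv (hZdiff n) (hZ0 0 n)
end
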